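/- Fix k ∈ ℕ and let 𝓓_k be the class of k-degenerate graphs. For every fixed forest T, the maximum number of copies of T over n-vertex k-degenerate graphs is Θ(n^{α_k(T)}), where α_k(T) is the maximum size of a stable set among vertices of T of degree at most k. -/

import Mathlib

open SimpleGraph

/-- The number of copies of `H` in `G`: subgraphs of `G` isomorphic to `H`. -/
noncomputable def numCopies {α β : Type*} (H : SimpleGraph α) (G : SimpleGraph β) : ℕ :=
  Nat.card {G' : G.Subgraph // Nonempty (G'.coe ≃g H)}

/-- `α_s(T)`: the maximum size of a stable set among the vertices of `T` of degree at most `s`. -/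
noncomputable def alphaDeg {V : Type*} (T : SimpleGraph V) (s : ℕ) : ℕ :=
  sSup {k | ∃ S : Finset V, S.card = k ∧ (∀ v ∈ S, (T.neighborSet v).ncard ≤ s) ∧
    ∀ u ∈ S, ∀ v ∈ S, ¬ T.Adj u v}

/-- `G` is `k`-degenerate: every non-empty (induced) subgraph has a vertex of degree at most `k`. -/
def Degenerate {V : Type*} (k : ℕ) (G : SimpleGraph V) : Prop :=
  ∀ s : Set V, s.Nonempty → ∃ v ∈ s, (G.neighborSet v ∩ s).ncard ≤ k

/-!
Upper bound: order the vertices of `G` so that each has at most `k` later neighbours. A copy `f`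
of `T` is determined by the images of the vertices of `T` that come before all their neighbours,
and, for every other vertex `v`, by an earlier neighbour `u` together with the index of `f v` among
the at most `k` later neighbours of `f u`. Those first vertices form a stable set of vertices of
degree at most `k`, so there are at most `α_k(T)` of them, which leaves `O(n ^ α_k(T))` copies.

Lower bound: blow up each vertex of a stable set `S` of `α_k(T)` vertices of degree at most `k`
into `m` independent copies. Every copy has degree at most `k` and the remaining vertices span a
forest, so the graph is `k`-degenerate, and choosing one copy of every vertex of `S` gives
`m ^ α_k(T)` distinct copies of `T`.
-/

section Degeneracy

variable {V W : Type*} {G : SimpleGraph V} {k : ℕ}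

lemma SimpleGraph.IsAcyclic.exists_ncard_neighborSet_le_one [Finite V] [Nonempty V]
    (hG : G.IsAcyclic) : ∃ v, (G.neighborSet v).ncard ≤ 1 := by
  obtain ⟨u, v, p, hp, hmax⟩ := Walk.exists_isPath_forall_isPath_length_le_length G
  refine ⟨u, (Set.ncard_le_ncard (t := {p.snd}) ?_).trans (Set.ncard_singleton _).le⟩
  intro w (hw : G.Adj u w)
  by_cases hwp : w ∈ p.support
  · exact hG.eq_snd_of_adj_start hp hw hwp
  · have := hmax _ _ (.cons hw.symm p) (hp.cons hwp)
    simp at this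

lemma SimpleGraph.IsAcyclic.degenerate [Finite V] (hG : G.IsAcyclic) (hk : 1 ≤ k) :
    Degenerate k G := by
  intro s ⟨v, hv⟩
  have : Nonempty s := ⟨⟨v, hv⟩⟩
  obtain ⟨⟨w, hws⟩, hw⟩ := (hG.induce s).exists_ncard_neighborSet_le_one
  have : G.neighborSet w ∩ s = (↑) '' (G.induce s).neighborSet ⟨w, hws⟩ := by
    ext x
    simp [and_comm]
  refine ⟨w, hws, ?_⟩
  rw [this, Set.ncard_image_of_injective _ Subtype.val_injective]
  exact hw.trans hk

lemma degenerate_of_comap [Finite V] {ι : W → V} (hι : ι.Injective)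
    (hcomap : Degenerate k (G.comap ι)) (hdeg : ∀ v ∉ Set.range ι, (G.neighborSet v).ncard ≤ k) :
    Degenerate k G := by
  intro s hs
  by_cases hout : ∃ v ∈ s, v ∉ Set.range ι
  · obtain ⟨v, hvs, hv⟩ := hout
    exact ⟨v, hvs, (Set.ncard_le_ncard Set.inter_subset_left).trans (hdeg v hv)⟩
  push Not at hout
  obtain ⟨v, hv⟩ := hs
  obtain ⟨w, rfl⟩ := hout v hv
  obtain ⟨u, hu, hdeg'⟩ := hcomap (ι ⁻¹' s) ⟨w, hv⟩
  have : G.neighborSet (ι u) ∩ s = ι '' ((G.comap ι).neighborSet u ∩ ι ⁻¹' s) := by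
    ext x
    constructor
    · rintro ⟨hxu, hxs⟩
      obtain ⟨y, rfl⟩ := hout x hxs
      exact ⟨y, ⟨hxu, hxs⟩, rfl⟩
    · rintro ⟨y, ⟨hyu, hys⟩, rfl⟩
      exact ⟨hyu, hys⟩
  refine ⟨ι u, hu, ?_⟩
  rwa [this, Set.ncard_image_of_injective _ hι]

lemma Degenerate.sum {H : SimpleGraph W} (hG : Degenerate k G) (hH : Degenerate k H) :
    Degenerate k (G ⊕g H) := by
  intro s hs
  obtain ⟨v | w, hv⟩ := hs
  · obtain ⟨u, hu, hdeg⟩ := hG (Sum.inl ⁻¹' s) ⟨v, hv⟩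
    have : (G ⊕g H).neighborSet (.inl u) ∩ s = Sum.inl '' (G.neighborSet u ∩ Sum.inl ⁻¹' s) := by
      ext (x | x) <;> simp
    refine ⟨.inl u, hu, ?_⟩
    rwa [this, Set.ncard_image_of_injective _ Sum.inl_injective]
  · obtain ⟨u, hu, hdeg⟩ := hH (Sum.inr ⁻¹' s) ⟨w, hv⟩
    have : (G ⊕g H).neighborSet (.inr u) ∩ s = Sum.inr '' (H.neighborSet u ∩ Sum.inr ⁻¹' s) := by
      ext (x | x) <;> simp
    refine ⟨.inr u, hu, ?_⟩
    rwa [this, Set.ncard_image_of_injective _ Sum.inr_injective]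

lemma degenerate_bot : Degenerate k (⊥ : SimpleGraph V) := fun _ ⟨v, hv⟩ ↦ ⟨v, hv, by simp⟩

def SimpleGraph.laterNeighborSet (G : SimpleGraph V) (r : V → ℕ) (v : V) : Set V :=
  G.neighborSet v ∩ {w | r v < r w}

lemma Degenerate.exists_rank [Finite V] (hG : Degenerate k G) :
    ∃ r : V → ℕ, r.Injective ∧ ∀ v, (G.laterNeighborSet r v).ncard ≤ k := by
  classical
  suffices h : ∀ s : Finset V, ∃ r : V → ℕ, Set.InjOn r s ∧
      ∀ v ∈ s, (G.laterNeighborSet r v ∩ s).ncard ≤ k by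
    have := Fintype.ofFinite V
    obtain ⟨r, hinj, hr⟩ := h Finset.univ
    exact ⟨r, Set.injOn_univ.mp (by simpa using hinj), fun v ↦ by simpa using hr v⟩
  intro s
  induction s using Finset.strongInduction with
  | H s ih =>
  rcases s.eq_empty_or_nonempty with rfl | hs
  · simp
  obtain ⟨v, hv, hdeg⟩ := hG s (by simpa using hs)
  obtain ⟨r, hinj, hr⟩ := ih (s.erase v) (Finset.erase_ssubset hv)
  -- put `v`, which has at most `k` neighbours in `s`, before everything else
  refine ⟨fun w ↦ if w = v then 0 else r w + 1, ?_, fun w hw ↦ ?_⟩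
  · intro a ha b hb hab
    dsimp only at hab
    split_ifs at hab with hav hbv hbv
    · rw [hav, hbv]
    · exact hinj (Finset.mem_erase.2 ⟨hav, ha⟩) (Finset.mem_erase.2 ⟨hbv, hb⟩) (by omega)
  by_cases hwv : w = v
  · subst hwv
    refine le_trans (Set.ncard_le_ncard ?_) hdeg
    exact fun x hx ↦ ⟨hx.1.1, hx.2⟩
  · refine le_of_eq_of_le (congrArg Set.ncard ?_) (hr w (by simpa [hwv] using hw))
    ext x
    by_cases hxv : x = v <;> simp [SimpleGraph.laterNeighborSet, hxv, hwv]

end Degeneracy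

section AlphaDeg

variable {V : Type*} [Finite V] (T : SimpleGraph V) (s : ℕ)

lemma bddAbove_alphaDeg_set : BddAbove {k | ∃ S : Finset V, S.card = k ∧
    (∀ v ∈ S, (T.neighborSet v).ncard ≤ s) ∧ ∀ u ∈ S, ∀ v ∈ S, ¬ T.Adj u v} := by
  have := Fintype.ofFinite V
  exact ⟨Fintype.card V, by rintro _ ⟨S, rfl, -, -⟩; exact S.card_le_univ⟩

lemma exists_ncard_eq_alphaDeg : ∃ S : Set V, S.ncard = alphaDeg T s ∧
    (∀ v ∈ S, (T.neighborSet v).ncard ≤ s) ∧ ∀ u ∈ S, ∀ v ∈ S, ¬ T.Adj u v := by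
  obtain ⟨S, hcard, hdeg, hS⟩ : alphaDeg T s ∈ _ :=
    Nat.sSup_mem ⟨0, ∅, by simp⟩ (bddAbove_alphaDeg_set T s)
  exact ⟨S, by rwa [Set.ncard_coe_finset], hdeg, hS⟩

variable {T s}

lemma ncard_le_alphaDeg {S : Set V} (hdeg : ∀ v ∈ S, (T.neighborSet v).ncard ≤ s)
    (hS : ∀ u ∈ S, ∀ v ∈ S, ¬ T.Adj u v) : S.ncard ≤ alphaDeg T s := by
  refine le_csSup (bddAbove_alphaDeg_set T s) ⟨S.toFinite.toFinset, ?_, ?_, ?_⟩ <;>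
    simp_all [Set.ncard_eq_toFinset_card S]

variable (T s)

lemma alphaDeg_le_card : alphaDeg T s ≤ Nat.card V := by
  obtain ⟨S, hS, -⟩ := exists_ncard_eq_alphaDeg T s
  exact hS ▸ S.ncard_le_card

end AlphaDeg

lemma pow_le_pow_alphaDeg_of_map {U V : Type*} [Finite U] [Finite V] {T : SimpleGraph U} {k m : ℕ}
    (f : U → V) (hm : m ≤ alphaDeg T k) : Nat.card V ^ m ≤ Nat.card V ^ alphaDeg T k := by
  rcases isEmpty_or_nonempty U with hU | ⟨⟨u⟩⟩
  · have : alphaDeg T k = 0 := by simpa using alphaDeg_le_card T k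
    rw [show m = 0 by omega, this]
  · exact Nat.pow_le_pow_right (Nat.card_pos_iff.2 ⟨⟨f u⟩, inferInstance⟩) hm

section Copies

variable {U V W : Type*} {T : SimpleGraph U} {G : SimpleGraph V} {G' : SimpleGraph W}

instance [Finite U] [Finite V] : Finite (Copy T G) :=
  Finite.of_injective _ DFunLike.coe_injective

lemma numCopies_le_card_copy [Finite U] [Finite V] : numCopies T G ≤ Nat.card (Copy T G) := by
  have hrange :
      {G' : G.Subgraph | Nonempty (G'.coe ≃g T)} = Set.range (Copy.toSubgraph (A := T)) := by
    rw [Copy.range_toSubgraph]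
    exact Set.ext fun _ ↦ ⟨fun ⟨e⟩ ↦ ⟨e.symm⟩, fun ⟨e⟩ ↦ ⟨e.symm⟩⟩
  rw [numCopies, ← Set.coe_ofPred, hrange]
  exact Finite.card_range_le _

lemma card_le_numCopies [Finite V] {ι : Type*} (F : ι → Copy T G)
    (hF : (fun i ↦ (F i).toSubgraph).Injective) : Nat.card ι ≤ numCopies T G :=
  Nat.card_le_card_of_injective (fun i ↦ ⟨(F i).toSubgraph, ⟨(F i).isoToSubgraph.symm⟩⟩)
    fun _ _ h ↦ hF (congrArg Subtype.val h)

lemma SimpleGraph.Subgraph.map_injective {f : G →g G'} (hf : Function.Injective f) :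
    (Subgraph.map f).Injective := by
  intro H₁ H₂ h
  ext a
  · have := congrArg (fun H ↦ f ⁻¹' H.verts) h
    simp only [Subgraph.map_verts, Set.preimage_image_eq _ hf] at this
    rw [this]
  · rename_i b
    have := congrArg (fun H ↦ H.Adj (f a) (f b)) h
    simpa [Relation.map_apply, hf.eq_iff] using this

lemma numCopies_le_of_copy [Finite W] (e : Copy G G') : numCopies T G ≤ numCopies T G' :=
  Nat.card_le_card_of_injective
    (fun H ↦ ⟨H.1.map e.toHom, ⟨(e.isoSubgraphMap H.1).symm.trans (Classical.choice H.2)⟩⟩)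
    fun _ _ h ↦ Subtype.ext (Subgraph.map_injective e.injective (congrArg Subtype.val h))

end Copies

section ParentCode

variable {U V : Type*} {T : SimpleGraph U} {G : SimpleGraph V} {k : ℕ} {r : V → ℕ}
  (e : ∀ w, G.laterNeighborSet r w ↪ Fin k)

open Classical in
noncomputable def parentCode (f : Copy T G) (v : U) : Option (U × Fin k) :=
  if h : ∃ u, T.Adj v u ∧ r (f u) < r (f v) then
    some (h.choose, e (f h.choose) ⟨f v, (f.toHom.map_adj h.choose_spec.1).symm, h.choose_spec.2⟩)
  else none

lemma parentCode_eq_none {f : Copy T G} {v : U} :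
    parentCode e f v = none ↔ ∀ u, T.Adj v u → r (f v) ≤ r (f u) := by
  unfold parentCode
  split_ifs with h
  · simpa using h
  · push Not at h
    simpa using h

lemma parentCode_eq_some {f : Copy T G} {v u : U} {i : Fin k}
    (h : parentCode e f v = some (u, i)) : ∃ (hadj : T.Adj v u) (hlt : r (f u) < r (f v)),
      e (f u) ⟨f v, (f.toHom.map_adj hadj).symm, hlt⟩ = i := by
  unfold parentCode at h
  split_ifs at h with hex
  obtain ⟨rfl, rfl⟩ := Prod.mk.inj (Option.some.inj h)
  exact ⟨hex.choose_spec.1, hex.choose_spec.2, rfl⟩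

lemma SimpleGraph.Copy.eq_of_parentCode_eq {f g : Copy T G} (hc : parentCode e f = parentCode e g)
    (hroot : ∀ v, parentCode e f v = none → f v = g v) : f = g := by
  have he : ∀ {w w' : V} (_ : w = w') {a b : V} ha hb, e w ⟨a, ha⟩ = e w' ⟨b, hb⟩ → a = b := by
    rintro w _ rfl a b ha hb h
    exact congrArg Subtype.val ((e w).injective h)
  ext v
  induction hn : r (f v) using Nat.strong_induction_on generalizing v with
  | _ n ih =>
  cases hv : parentCode e f v with
  | none => exact hroot v hv
  | some p =>
    obtain ⟨u, i⟩ := p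
    obtain ⟨_, hlt, hf⟩ := parentCode_eq_some e hv
    obtain ⟨_, _, hg⟩ := parentCode_eq_some e (congrFun hc v ▸ hv)
    exact he (ih _ (hn ▸ hlt) u rfl) _ _ (hf.trans hg.symm)

lemma card_fiber_parentCode_le [Finite U] [Finite V] (c : U → Option (U × Fin k)) :
    Nat.card {f : Copy T G // parentCode e f = c} ≤ Nat.card V ^ {v | c v = none}.ncard := by
  rw [← Nat.card_coe_set_eq, ← Nat.card_fun]
  refine Nat.card_le_card_of_injective (fun f (v : {v | c v = none}) ↦ f.1 v) ?_
  rintro ⟨f, hf⟩ ⟨g, hg⟩ h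
  exact Subtype.ext <|
    Copy.eq_of_parentCode_eq e (hf.trans hg.symm) fun v hv ↦ congrFun h ⟨v, hf ▸ hv⟩

lemma ncard_parentCode_eq_none_le_alphaDeg [Finite U] [Finite V] (hr : r.Injective)
    (hdeg : ∀ w, (G.laterNeighborSet r w).ncard ≤ k) (f : Copy T G) :
    {v | parentCode e f v = none}.ncard ≤ alphaDeg T k := by
  apply ncard_le_alphaDeg
  · intro v hv
    rw [Set.mem_ofPred_eq, parentCode_eq_none] at hv
    refine le_trans (Set.ncard_le_ncard_of_injOn f ?_ f.injective.injOn) (hdeg (f v))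
    intro u hu
    exact ⟨f.toHom.map_adj hu, lt_of_le_of_ne (hv u hu) (hr.ne (f.injective.ne hu.ne))⟩
  · intro u hu v hv huv
    simp only [Set.mem_ofPred_eq, parentCode_eq_none] at hu hv
    exact huv.ne (f.injective (hr (le_antisymm (hu v huv) (hv u huv.symm))))

end ParentCode

theorem numCopies_le_of_degenerate {U V : Type*} [Finite U] [Finite V] {T : SimpleGraph U}
    {G : SimpleGraph V} {k : ℕ} (hG : Degenerate k G) :
    numCopies T G ≤ (Nat.card U * k + 1) ^ Nat.card U * Nat.card V ^ alphaDeg T k := by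
  classical
  have := Fintype.ofFinite U
  obtain ⟨r, hr, hdeg⟩ := hG.exists_rank
  have e : ∀ w, G.laterNeighborSet r w ↪ Fin k := fun w ↦ (Finite.equivFin _).toEmbedding.trans
    (Fin.castLEEmb (by rw [Nat.card_coe_set_eq]; exact hdeg w))
  have hfiber (c) : Nat.card {f : Copy T G // parentCode e f = c} ≤ Nat.card V ^ alphaDeg T k := by
    rcases isEmpty_or_nonempty {f : Copy T G // parentCode e f = c} with h | ⟨f, rfl⟩
    · simp
    · exact (card_fiber_parentCode_le e _).trans
        (pow_le_pow_alphaDeg_of_map f (ncard_parentCode_eq_none_le_alphaDeg e hr hdeg f))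
  calc numCopies T G ≤ Nat.card (Copy T G) := numCopies_le_card_copy
    _ = ∑ c, Nat.card {f : Copy T G // parentCode e f = c} := by
        rw [← Nat.card_sigma, Nat.card_congr (Equiv.sigmaFiberEquiv _)]
    _ ≤ ∑ c : U → Option (U × Fin k), Nat.card V ^ alphaDeg T k :=
        Finset.sum_le_sum fun c _ ↦ hfiber c
    _ = _ := by simp [Nat.card_eq_fintype_card]

lemma Function.LeftInverse.eq_of_range_eq {U V : Type*} {p : V → U} {σ τ : U → V}
    (hσ : LeftInverse p σ) (hτ : LeftInverse p τ) (h : Set.range σ = Set.range τ) : σ = τ := by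
  funext u
  obtain ⟨w, hw⟩ : σ u ∈ Set.range τ := h ▸ ⟨u, rfl⟩
  rw [← hw, ← hσ u, ← hw, hτ w]

def SimpleGraph.Copy.ofLeftInverse {U V : Type*} (T : SimpleGraph U) {p : V → U} {σ : U → V}
    (h : Function.LeftInverse p σ) : Copy T (T.comap p) :=
  ⟨⟨σ, fun hab ↦ by simpa [h _] using hab⟩, h.injective⟩

section Blowup

variable {V : Type*} (T : SimpleGraph V) (S : Set V) (m : ℕ)

def blowupProj : ↥Sᶜ ⊕ (↥S × Fin m) → V := Sum.elim Subtype.val fun q ↦ q.1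

def blowup : SimpleGraph (↥Sᶜ ⊕ (↥S × Fin m)) := T.comap (blowupProj S m)

open Classical in
noncomputable def blowupSection (f : S → Fin m) (v : V) : ↥Sᶜ ⊕ (↥S × Fin m) :=
  if h : v ∈ S then .inr (⟨v, h⟩, f ⟨v, h⟩) else .inl ⟨v, h⟩

lemma leftInverse_blowupProj_blowupSection (f : S → Fin m) :
    Function.LeftInverse (blowupProj S m) (blowupSection S m f) := by
  intro v
  unfold blowupSection
  split_ifs <;> rfl

lemma blowupSection_injective : (blowupSection S m).Injective := by
  intro f g h
  funext x
  simpa [blowupSection, x.2] using congrFun h x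

lemma pow_ncard_le_numCopies_blowup [Finite V] : m ^ S.ncard ≤ numCopies T (blowup T S m) := by
  have hσ := leftInverse_blowupProj_blowupSection S m
  have hinj : (fun f ↦ (Copy.ofLeftInverse T (hσ f)).toSubgraph).Injective := fun f g h ↦
    blowupSection_injective S m <| (hσ f).eq_of_range_eq (hσ g) <| by
      simpa [Copy.ofLeftInverse] using congrArg Subgraph.verts h
  calc m ^ S.ncard = Nat.card (S → Fin m) := by
        rw [Nat.card_fun, Nat.card_fin, Nat.card_coe_set_eq]
    _ ≤ _ := card_le_numCopies _ hinj

lemma card_blowup_le [Finite V] : Nat.card (↥Sᶜ ⊕ (↥S × Fin m)) ≤ Nat.card V + S.ncard * m := by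
  rw [Nat.card_sum, Nat.card_prod, Nat.card_fin, Nat.card_coe_set_eq, Nat.card_coe_set_eq]
  exact Nat.add_le_add_right (Set.ncard_le_card _) _

variable {T S}

lemma degenerate_blowup [Finite V] {k : ℕ} (hT : T.IsAcyclic) (hk : 1 ≤ k)
    (hdeg : ∀ v ∈ S, (T.neighborSet v).ncard ≤ k) (hS : ∀ u ∈ S, ∀ v ∈ S, ¬ T.Adj u v) :
    Degenerate k (blowup T S m) := by
  refine degenerate_of_comap Sum.inl_injective ((hT.induce Sᶜ).degenerate hk) ?_
  rintro (v | ⟨v, i⟩) hv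
  · exact absurd ⟨v, rfl⟩ hv
  have hnbr : ∀ x ∈ (blowup T S m).neighborSet (.inr (v, i)), ∃ a, x = .inl a := by
    rintro (a | ⟨a, j⟩) hx
    · exact ⟨a, rfl⟩
    · exact absurd hx (hS v v.2 a a.2)
  refine le_trans (Set.ncard_le_ncard_of_injOn (blowupProj S m) (fun x hx ↦ hx) ?_) (hdeg v v.2)
  intro x hx y hy hxy
  obtain ⟨a, rfl⟩ := hnbr x hx
  obtain ⟨b, rfl⟩ := hnbr y hy
  exact congrArg Sum.inl (Subtype.ext hxy)

end Blowup

universe u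

lemma exists_degenerate_card_eq_of_card_le {U : Type*} {W : Type u} [Finite W] {T : SimpleGraph U}
    {G : SimpleGraph W} {k n : ℕ} (hG : Degenerate k G) (hn : Nat.card W ≤ n) :
    ∃ (VG : Type u) (_ : Finite VG) (G' : SimpleGraph VG), Degenerate k G' ∧ Nat.card VG = n ∧
      numCopies T G ≤ numCopies T G' := by
  refine ⟨W ⊕ Fin (n - Nat.card W), inferInstance, G ⊕g ⊥, hG.sum degenerate_bot, ?_,
    numCopies_le_of_copy Embedding.sumInl.toCopy⟩
  rw [Nat.card_sum, Nat.card_fin]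
  omega

theorem exists_degenerate_pow_alphaDeg_le_numCopies {V : Type u} [Finite V] {T : SimpleGraph V}
    {k : ℕ} (hT : T.IsAcyclic) (hk : 1 ≤ k) {m n : ℕ} (hn : Nat.card V + alphaDeg T k * m ≤ n) :
    ∃ (VG : Type u) (_ : Finite VG) (G : SimpleGraph VG), Degenerate k G ∧ Nat.card VG = n ∧
      m ^ alphaDeg T k ≤ numCopies T G := by
  obtain ⟨S, hcard, hdeg, hS⟩ := exists_ncard_eq_alphaDeg T k
  obtain ⟨VG, _, G, hG, hVG, hle⟩ := exists_degenerate_card_eq_of_card_le (T := T)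
    (degenerate_blowup m hT hk hdeg hS) ((card_blowup_le S m).trans (hcard ▸ hn))
  exact ⟨VG, inferInstance, G, hG, hVG, hcard ▸ (pow_ncard_le_numCopies_blowup T S m).trans hle⟩

/-- `C(T, 𝓓_k, n) ∈ Θ(n^{α_k(T)})` for every fixed forest `T`. -/
theorem stmt11 {VT : Type} [Fintype VT] (k : ℕ) (hk : 1 ≤ k)
    (T : SimpleGraph VT) (hT : T.IsAcyclic) :
    ∃ c₁ c₂ : ℝ, 0 < c₁ ∧ 0 < c₂ ∧ ∃ N : ℕ,
      (∀ n : ℕ, N ≤ n → ∃ (VG : Type) (_ : Finite VG) (G : SimpleGraph VG),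
        Degenerate k G ∧ Nat.card VG = n ∧
        c₁ * (n : ℝ) ^ (alphaDeg T k) ≤ (numCopies T G : ℝ)) ∧
      (∀ (VG : Type) (G : SimpleGraph VG), Finite VG → Degenerate k G →
        (numCopies T G : ℝ) ≤ c₂ * (Nat.card VG : ℝ) ^ (alphaDeg T k)) := by
  set t := Nat.card VT
  refine ⟨(2 * t + 2 : ℝ)⁻¹ ^ alphaDeg T k, ((t * k + 1) ^ t : ℕ), by positivity, by positivity,
    t * (t + 1), fun n hn ↦ ?_, fun VG G _ hG ↦ ?_⟩
  swap
  · exact_mod_cast numCopies_le_of_degenerate (T := T) hG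
  set m := n / (t + 1)
  have htm : t ≤ m := (Nat.le_div_iff_mul_le t.succ_pos).2 hn
  have hmn : (t + 1) * m ≤ n := Nat.mul_div_le n (t + 1)
  have hnm : n ≤ (2 * t + 2) * m := by
    have : n < (t + 1) * (m + 1) := Nat.lt_mul_div_succ n t.succ_pos
    nlinarith
  have hα : alphaDeg T k ≤ t := alphaDeg_le_card T k
  obtain ⟨VG, _, G, hG, hcard, hcopies⟩ :=
    exists_degenerate_pow_alphaDeg_le_numCopies hT hk (m := m) (n := n) (by nlinarith)
  refine ⟨VG, inferInstance, G, hG, hcard, ?_⟩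
  calc (2 * t + 2 : ℝ)⁻¹ ^ alphaDeg T k * n ^ alphaDeg T k
      = ((n : ℝ) / (2 * t + 2)) ^ alphaDeg T k := by rw [div_eq_mul_inv, mul_pow, mul_comm]
    _ ≤ (m : ℝ) ^ alphaDeg T k := by
        gcongr
        rw [div_le_iff₀ (by positivity), mul_comm]
        exact_mod_cast hnm
    _ ≤ numCopies T G := by exact_mod_cast hcopies
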